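/- Fix n ≥ 2 and complex numbers q_{ij} (1 ≤ i, j ≤ n) with q_{ii} = 1, q_{ji} = q_{ij}^{-1} and |q_{ij}| = 1. On ℓ²({1, …, n}^m) define P_m = (1/m!) Σ_{σ ∈ S_m} U^{m,q}_σ, where U^{m,q}_σ e_x = q^σ(x) e_{x ∘ σ^{-1}}. Then P_m is an orthogonal projection (P_m^* = P_m and P_m² = P_m), and its range equals the fixed space { u ∈ ℓ²({1, …, n}^m) : U^{m,q}_σ u = u for all σ ∈ S_m }. -/

import Mathlib

/-!
The inversion factors form a cocycle, `q^{στ}(x) = q^σ(x ∘ τ⁻¹) q^τ(x)`: a pair of positions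
that `τ` inverts and `σ` inverts back contributes `q_{ij} q_{ji} = 1`. Hence `σ ↦ U_σ` is a
representation of `S_m`, unitary because `|q_{ij}| = 1` and `x ↦ x ∘ σ⁻¹` permutes the basis.
`P_m` is the group average of this representation, so it is the projection onto the invariant
vectors, and it is self-adjoint because `U_σ^* = U_{σ⁻¹}`.
-/

open scoped BigOperators

/-- `q^σ(x) = ∏ q_{x_{σ⁻¹(k)} x_{σ⁻¹(i)}}`, the product over all pairs `i < k`
with `σ⁻¹(i) > σ⁻¹(k)`. -/
noncomputable def qSigma {n : ℕ} (q : Fin n → Fin n → ℂ) {m : ℕ} (x : Fin m → Fin n)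
    (σ : Equiv.Perm (Fin m)) : ℂ :=
  ∏ p ∈ Finset.univ.filter (fun p : Fin m × Fin m => p.1 < p.2 ∧ σ⁻¹ p.2 < σ⁻¹ p.1),
    q (x (σ⁻¹ p.2)) (x (σ⁻¹ p.1))

/-- The operator `U^{m,q}_σ` on `ℓ²({1,…,n}^m)` with `U^{m,q}_σ e_x = q^σ(x) e_{x ∘ σ⁻¹}`. -/
noncomputable def Uop {n : ℕ} (q : Fin n → Fin n → ℂ) (m : ℕ) (σ : Equiv.Perm (Fin m)) :
    EuclideanSpace ℂ (Fin m → Fin n) →L[ℂ] EuclideanSpace ℂ (Fin m → Fin n) :=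
  LinearMap.toContinuousLinearMap
    { toFun := fun f => (WithLp.toLp 2 (fun y => qSigma q (fun i => y (σ i)) σ * f (fun i => y (σ i))) :
        EuclideanSpace ℂ (Fin m → Fin n))
      map_add' := by
        intro f g
        ext y
        simp [PiLp.add_apply, mul_add]
      map_smul' := by
        intro c f
        ext y
        simp [PiLp.smul_apply, smul_eq_mul]
        try ring }

/-- The `q`-symmetrization operator `P_m = (1/m!) Σ_σ U^{m,q}_σ`. -/
noncomputable def Pm {n : ℕ} (q : Fin n → Fin n → ℂ) (m : ℕ) :
    EuclideanSpace ℂ (Fin m → Fin n) →L[ℂ] EuclideanSpace ℂ (Fin m → Fin n) :=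
  ((m.factorial : ℂ))⁻¹ • ∑ σ : Equiv.Perm (Fin m), Uop q m σ

theorem Fintype.prod_eq_prod_lt_mul_swap {α M : Type*} [Fintype α] [LinearOrder α] [CommMonoid M]
    (f : α × α → M) (hf : ∀ a, f (a, a) = 1) :
    ∏ p, f p = ∏ p with p.1 < p.2, f p * f p.swap := by
  rw [Finset.prod_mul_distrib, ← Finset.prod_filter_mul_prod_filter_not Finset.univ
    (fun p : α × α => p.1 < p.2)]
  congr 1
  calc ∏ p with ¬p.1 < p.2, f p = ∏ p with p.2 < p.1, f p := by
        refine (Finset.prod_subset (fun p hp => ?_) fun p hp hp' => ?_).symm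
        · simp only [Finset.mem_filter_univ] at hp ⊢
          exact hp.not_gt
        · simp only [Finset.mem_filter_univ, not_lt] at hp hp'
          rw [← Prod.mk.eta (p := p), le_antisymm hp hp', hf]
    _ = ∏ p with p.1 < p.2, f p.swap :=
        Finset.prod_nbij' Prod.swap Prod.swap (by simp) (by simp) (by simp) (by simp) (by simp)

section Inversions

variable {n : ℕ} (q : Fin n → Fin n → ℂ) {m : ℕ}

def inversionFactor (x : Fin m → Fin n) (σ : Equiv.Perm (Fin m)) (p : Fin m × Fin m) : ℂ :=
  if p.1 < p.2 ∧ σ p.2 < σ p.1 then q (x p.1) (x p.2) else 1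

theorem qSigma_eq_prod_inversionFactor (x : Fin m → Fin n) (σ : Equiv.Perm (Fin m)) :
    qSigma q x σ = ∏ p, inversionFactor q x σ p := by
  rw [qSigma, Finset.prod_filter]
  refine Fintype.prod_equiv ((Equiv.prodComm _ _).trans (Equiv.prodCongr σ⁻¹ σ⁻¹)) _ _
    fun p => ?_
  simp [inversionFactor, and_comm]

theorem inversionFactor_diag (x : Fin m → Fin n) (σ : Equiv.Perm (Fin m)) (a : Fin m) :
    inversionFactor q x σ (a, a) = 1 := by
  simp [inversionFactor]

theorem inversionFactor_mul_mul_swap (hq_inv : ∀ i j, q j i * q i j = 1) (x : Fin m → Fin n)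
    (σ τ : Equiv.Perm (Fin m)) {c d : Fin m} (hcd : c < d) :
    inversionFactor q x (σ * τ) (c, d) * inversionFactor q x (σ * τ) (d, c) =
      (inversionFactor q (x ∘ ⇑τ⁻¹) σ (τ c, τ d) * inversionFactor q (x ∘ ⇑τ⁻¹) σ (τ d, τ c)) *
        (inversionFactor q x τ (c, d) * inversionFactor q x τ (d, c)) := by
  have hτ : τ c ≠ τ d := τ.injective.ne hcd.ne
  have hστ : σ (τ c) ≠ σ (τ d) := σ.injective.ne hτ
  simp only [inversionFactor, hcd, hcd.not_gt, false_and, if_false, mul_one, true_and,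
    Equiv.Perm.mul_apply, Function.comp_apply, Equiv.Perm.coe_inv, Equiv.symm_apply_apply]
  rcases hτ.lt_or_gt with h | h <;> rcases hστ.lt_or_gt with h' | h' <;>
    simp [h, h', h.not_gt, h'.not_gt, hq_inv]

theorem qSigma_mul (hq_inv : ∀ i j, q j i * q i j = 1) (x : Fin m → Fin n)
    (σ τ : Equiv.Perm (Fin m)) :
    qSigma q x (σ * τ) = qSigma q (x ∘ ⇑τ⁻¹) σ * qSigma q x τ := by
  have hσ : qSigma q (x ∘ ⇑τ⁻¹) σ =
      ∏ p : Fin m × Fin m, inversionFactor q (x ∘ ⇑τ⁻¹) σ (τ p.1, τ p.2) := by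
    rw [qSigma_eq_prod_inversionFactor]
    exact (Fintype.prod_equiv (Equiv.prodCongr τ τ) _ _ fun p => rfl).symm
  simp only [hσ, qSigma_eq_prod_inversionFactor, Fintype.prod_eq_prod_lt_mul_swap _
    (inversionFactor_diag q _ _), Fintype.prod_eq_prod_lt_mul_swap (fun p => inversionFactor q
    (x ∘ ⇑τ⁻¹) σ (τ p.1, τ p.2)) fun a => inversionFactor_diag q _ _ _, ← Finset.prod_mul_distrib]
  refine Finset.prod_congr rfl fun p hp => ?_
  exact inversionFactor_mul_mul_swap q hq_inv x σ τ (Finset.mem_filter.1 hp).2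

theorem qSigma_one (x : Fin m → Fin n) : qSigma q x 1 = 1 :=
  Finset.prod_eq_one fun p hp => by
    simp only [Finset.mem_filter_univ, inv_one, Equiv.Perm.one_apply] at hp
    exact absurd hp.1 hp.2.not_gt

theorem norm_qSigma (hq_norm : ∀ i j, ‖q i j‖ = 1) (x : Fin m → Fin n) (σ : Equiv.Perm (Fin m)) :
    ‖qSigma q x σ‖ = 1 := by
  rw [qSigma, norm_prod]
  exact Finset.prod_eq_one fun p _ => hq_norm _ _

end Inversions

section Operators

open scoped InnerProductSpace

variable {n : ℕ} (q : Fin n → Fin n → ℂ) (m : ℕ)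

theorem Uop_apply (σ : Equiv.Perm (Fin m)) (f : EuclideanSpace ℂ (Fin m → Fin n))
    (y : Fin m → Fin n) : Uop q m σ f y = qSigma q (y ∘ σ) σ * f (y ∘ σ) :=
  rfl

theorem Uop_one : Uop q m 1 = 1 := by
  ext f y
  simp [Uop_apply, qSigma_one]

theorem Uop_mul (hq_inv : ∀ i j, q j i * q i j = 1) (σ τ : Equiv.Perm (Fin m)) :
    Uop q m (σ * τ) = Uop q m σ * Uop q m τ := by
  ext f y
  have hy : (y ∘ σ ∘ τ) ∘ ⇑τ⁻¹ = y ∘ σ := by ext; simp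
  calc Uop q m (σ * τ) f y = qSigma q (y ∘ σ ∘ τ) (σ * τ) * f (y ∘ σ ∘ τ) := rfl
    _ = qSigma q (y ∘ σ) σ * (qSigma q (y ∘ σ ∘ τ) τ * f (y ∘ σ ∘ τ)) := by
      rw [qSigma_mul q hq_inv, hy, mul_assoc]
    _ = (Uop q m σ * Uop q m τ) f y := rfl

theorem inner_Uop_Uop (hq_norm : ∀ i j, ‖q i j‖ = 1) (σ : Equiv.Perm (Fin m))
    (f g : EuclideanSpace ℂ (Fin m → Fin n)) :
    ⟪Uop q m σ f, Uop q m σ g⟫_ℂ = ⟪f, g⟫_ℂ := by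
  have hunit : ∀ y, starRingEnd ℂ (qSigma q y σ) * qSigma q y σ = 1 := fun y => by
    rw [Complex.conj_mul', norm_qSigma q hq_norm]
    norm_num
  simp only [PiLp.inner_apply, Uop_apply, RCLike.inner_apply', map_mul]
  refine Fintype.sum_bijective (· ∘ σ) (Equiv.arrowCongr σ.symm (Equiv.refl _)).bijective _ _
    fun y => ?_
  linear_combination (starRingEnd ℂ (f (y ∘ σ)) * g (y ∘ σ)) * hunit (y ∘ σ)

theorem star_Uop (hq_inv : ∀ i j, q j i * q i j = 1) (hq_norm : ∀ i j, ‖q i j‖ = 1)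
    (σ : Equiv.Perm (Fin m)) : star (Uop q m σ) = Uop q m σ⁻¹ := by
  have hisometry : star (Uop q m σ) * Uop q m σ = 1 := by
    refine ContinuousLinearMap.ext fun f => ext_inner_right ℂ fun g => ?_
    rw [mul_apply_eq_comp, ContinuousLinearMap.star_eq_adjoint,
      ContinuousLinearMap.adjoint_inner_left, inner_Uop_Uop q m hq_norm]
    rfl
  calc star (Uop q m σ) = star (Uop q m σ) * Uop q m σ * Uop q m σ⁻¹ := by
        rw [mul_assoc, ← Uop_mul q m hq_inv, mul_inv_cancel, Uop_one, mul_one]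
    _ = Uop q m σ⁻¹ := by rw [hisometry, one_mul]

noncomputable def UopRep (hq_inv : ∀ i j, q j i * q i j = 1) :
    Representation ℂ (Equiv.Perm (Fin m)) (EuclideanSpace ℂ (Fin m → Fin n)) :=
  ContinuousLinearMap.toLinearMapRingHom.toMonoidHom.comp
    ⟨⟨Uop q m, Uop_one q m⟩, Uop_mul q m hq_inv⟩

theorem isProj_Pm (hq_inv : ∀ i j, q j i * q i j = 1) :
    LinearMap.IsProj (UopRep q m hq_inv).invariants (Pm q m) := by
  have hPm : ⇑(Pm q m) = (UopRep q m hq_inv).averageMap := by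
    simp [Pm, Representation.averageMap, GroupAlgebra.average, map_sum, invOf_eq_inv,
      Fintype.card_perm, FunLike.coe_sum, UopRep]
  obtain ⟨hmem, hid⟩ := (UopRep q m hq_inv).isProj_averageMap
  exact ⟨hPm ▸ hmem, hPm ▸ hid⟩

theorem star_Pm (hq_inv : ∀ i j, q j i * q i j = 1) (hq_norm : ∀ i j, ‖q i j‖ = 1) :
    star (Pm q m) = Pm q m := by
  rw [Pm, star_smul, star_sum Finset.univ (Uop q m)]
  simp only [star_Uop q m hq_inv hq_norm, star_inv₀, star_natCast]
  congr 1
  exact Fintype.sum_equiv (Equiv.inv _) _ _ fun σ => rfl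

end Operators

theorem stmt7_general {n : ℕ} (q : Fin n → Fin n → ℂ)
    (hq2 : ∀ i j, q j i = (q i j)⁻¹) (hq3 : ∀ i j, ‖q i j‖ = 1)
    (m : ℕ) :
    star (Pm q m) = Pm q m ∧
    Pm q m * Pm q m = Pm q m ∧
    Set.range (Pm q m)
      = {u : EuclideanSpace ℂ (Fin m → Fin n) | ∀ σ : Equiv.Perm (Fin m), Uop q m σ u = u} := by
  have hq_inv : ∀ i j, q j i * q i j = 1 := fun i j => by
    rw [hq2, inv_mul_cancel₀ (norm_ne_zero_iff.1 (by rw [hq3]; exact one_ne_zero))]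
  obtain ⟨hmem, hid⟩ := isProj_Pm q m hq_inv
  refine ⟨star_Pm q m hq_inv hq3, ContinuousLinearMap.ext fun u => hid _ (hmem u), ?_⟩
  ext u
  exact ⟨by rintro ⟨v, rfl⟩; exact hmem v, fun hu => ⟨u, hid u hu⟩⟩

/-- `P_m = (1/m!) Σ_σ U^{m,q}_σ` is an orthogonal projection whose range is the fixed space
of all the `U^{m,q}_σ`. -/
theorem stmt7 {n : ℕ} (hn : 2 ≤ n) (q : Fin n → Fin n → ℂ)
    (hq1 : ∀ i, q i i = 1) (hq2 : ∀ i j, q j i = (q i j)⁻¹) (hq3 : ∀ i j, ‖q i j‖ = 1)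
    (m : ℕ) :
    star (Pm q m) = Pm q m ∧
    Pm q m * Pm q m = Pm q m ∧
    Set.range (Pm q m)
      = {u : EuclideanSpace ℂ (Fin m → Fin n) | ∀ σ : Equiv.Perm (Fin m), Uop q m σ u = u} :=
  stmt7_general q hq2 hq3 m
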